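/- Consider the system ṙ = Ar with A = diag(λ₁, λ₂, λ₃) where λ₃ < λ₂ < λ₁ < 0, and initial value with x₀y₀z₀ ≠ 0. Then the torsion τ(t) of the trajectory satisfies: τ(t) → 0 if λ₁ + λ₂ − λ₃ > 0; τ(t) tends to a nonzero constant if λ₁ + λ₂ − λ₃ = 0; and |τ(t)| → ∞ if λ₁ + λ₂ − λ₃ < 0, as t → +∞. -/

import Mathlib

open Matrix Real Filter

noncomputable def e3norm (a : Fin 3 → ℝ) : ℝ := Real.sqrt (∑ i, (a i) ^ 2)

/-- Torsion of a space curve `r`. -/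
noncomputable def tors (r : ℝ → Fin 3 → ℝ) (t : ℝ) : ℝ :=
  (crossProduct (deriv r t) (deriv (deriv r) t) ⬝ᵥ deriv (deriv (deriv r)) t) /
    (e3norm (crossProduct (deriv r t) (deriv (deriv r) t))) ^ 2

lemma hasDerivAt_cexp (a l t : ℝ) :
    HasDerivAt (fun t : ℝ => a * Real.exp (l * t)) (l * a * Real.exp (l * t)) t := by
  have h := (((hasDerivAt_id t).const_mul l).exp).const_mul a
  exact h.congr_deriv (by simp only [id_eq]; ring)

lemma deriv_vec (a b c la lb lc : ℝ) :
    deriv (fun t : ℝ => ![a * Real.exp (la * t), b * Real.exp (lb * t),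
        c * Real.exp (lc * t)]) =
      fun t : ℝ => ![la * a * Real.exp (la * t), lb * b * Real.exp (lb * t),
        lc * c * Real.exp (lc * t)] := by
  funext t
  apply HasDerivAt.deriv
  rw [hasDerivAt_pi]
  intro i
  fin_cases i <;> simpa using hasDerivAt_cexp _ _ t

lemma exp_tendsto_zero {l : ℝ} (hl : l < 0) :
    Tendsto (fun t : ℝ => Real.exp (l * t)) atTop (nhds 0) := by
  have h1 : Tendsto (fun t : ℝ => l * t) atTop atBot :=
    Tendsto.const_mul_atTop_of_neg hl tendsto_id
  exact Real.tendsto_exp_atBot.comp h1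

theorem torsion_limit_diagonal_negative
    (l1 l2 l3 x0 y0 z0 : ℝ)
    (h32 : l3 < l2) (h21 : l2 < l1) (h1 : l1 < 0)
    (h0 : x0 * y0 * z0 ≠ 0)
    (r : ℝ → Fin 3 → ℝ)
    (hr : r = fun t => ![x0 * Real.exp (l1 * t), y0 * Real.exp (l2 * t),
      z0 * Real.exp (l3 * t)]) :
    (l1 + l2 - l3 > 0 → Tendsto (tors r) atTop (nhds 0)) ∧
      (l1 + l2 - l3 = 0 → ∃ c : ℝ, c ≠ 0 ∧ Tendsto (tors r) atTop (nhds c)) ∧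
      (l1 + l2 - l3 < 0 → Tendsto (fun t => |tors r t|) atTop atTop) := by
  subst hr
  have hx0 : x0 ≠ 0 := fun h => h0 (by rw [h]; ring)
  have hy0 : y0 ≠ 0 := fun h => h0 (by rw [h]; ring)
  have hz0 : z0 ≠ 0 := fun h => h0 (by rw [h]; ring)
  have hl1 : l1 ≠ 0 := ne_of_lt h1
  have hl2 : l2 ≠ 0 := ne_of_lt (h21.trans h1)
  have hl3 : l3 ≠ 0 := ne_of_lt ((h32.trans h21).trans h1)
  set K : ℝ := l1 * l2 * l3 * (l2 - l1) * (l3 - l1) * (l3 - l2) * (x0 * y0 * z0) with hK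
  set A : ℝ := l2 * l3 * (l3 - l2) * (y0 * z0) with hA
  set B : ℝ := l1 * l3 * (l1 - l3) * (x0 * z0) with hB
  set C : ℝ := l1 * l2 * (l2 - l1) * (x0 * y0) with hC
  have hKne : K ≠ 0 := by
    rw [hK]
    refine mul_ne_zero (mul_ne_zero (mul_ne_zero (mul_ne_zero (mul_ne_zero
      (mul_ne_zero hl1 hl2) hl3) ?_) ?_) ?_) h0
    · exact sub_ne_zero.mpr (ne_of_lt h21)
    · exact sub_ne_zero.mpr (ne_of_lt (h32.trans h21))
    · exact sub_ne_zero.mpr (ne_of_lt h32)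
  have hCne : C ≠ 0 := by
    rw [hC]
    exact mul_ne_zero (mul_ne_zero (mul_ne_zero hl1 hl2)
      (sub_ne_zero.mpr (ne_of_lt h21))) (mul_ne_zero hx0 hy0)
  set D : ℝ → ℝ := fun t =>
    A ^ 2 * Real.exp ((l3 - l1) * t) ^ 2 + B ^ 2 * Real.exp ((l3 - l2) * t) ^ 2 + C ^ 2
    with hD
  have hDpos : ∀ t, 0 < D t := by
    intro t
    have h3 : 0 < C ^ 2 := by positivity
    have h1' : 0 ≤ A ^ 2 * Real.exp ((l3 - l1) * t) ^ 2 := by positivity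
    have h2' : 0 ≤ B ^ 2 * Real.exp ((l3 - l2) * t) ^ 2 := by positivity
    simp only [hD]
    linarith
  -- closed form of the torsion
  have key : ∀ t, tors (fun t => ![x0 * Real.exp (l1 * t), y0 * Real.exp (l2 * t),
      z0 * Real.exp (l3 * t)]) t = Real.exp ((l3 - l1 - l2) * t) * (K / D t) := by
    intro t
    unfold tors
    rw [deriv_vec, deriv_vec, deriv_vec]
    have e1 : Real.exp (l1 * t) ≠ 0 := Real.exp_ne_zero _
    have e2 : Real.exp (l2 * t) ≠ 0 := Real.exp_ne_zero _
    have e3 : Real.exp (l3 * t) ≠ 0 := Real.exp_ne_zero _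
    have hx1 : Real.exp ((l3 - l1 - l2) * t) =
        Real.exp (l3 * t) / (Real.exp (l1 * t) * Real.exp (l2 * t)) := by
      rw [← Real.exp_add, ← Real.exp_sub]; ring_nf
    have hx2 : Real.exp ((l3 - l1) * t) = Real.exp (l3 * t) / Real.exp (l1 * t) := by
      rw [← Real.exp_sub]; ring_nf
    have hx3 : Real.exp ((l3 - l2) * t) = Real.exp (l3 * t) / Real.exp (l2 * t) := by
      rw [← Real.exp_sub]; ring_nf
    have hcross : ∀ u v : Fin 3 → ℝ, (crossProduct u) v =
        ![u 1 * v 2 - u 2 * v 1, u 2 * v 0 - u 0 * v 2, u 0 * v 1 - u 1 * v 0] := by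
      intro u v
      simp [crossProduct]
    rw [hcross]
    unfold e3norm
    rw [Fin.sum_univ_three]
    rw [Real.sq_sqrt (by positivity)]
    simp only [dotProduct, Fin.sum_univ_three, Matrix.cons_val_zero, Matrix.cons_val_one,
      Matrix.head_cons, Matrix.cons_val_two, Matrix.tail_cons]
    have hc2 : l1 * x0 * Real.exp (l1 * t) * (l2 * (l2 * y0) * Real.exp (l2 * t)) -
        l2 * y0 * Real.exp (l2 * t) * (l1 * (l1 * x0) * Real.exp (l1 * t)) =
        C * (Real.exp (l1 * t) * Real.exp (l2 * t)) := by
      rw [hC]; ring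
    have hc2ne : l1 * x0 * Real.exp (l1 * t) * (l2 * (l2 * y0) * Real.exp (l2 * t)) -
        l2 * y0 * Real.exp (l2 * t) * (l1 * (l1 * x0) * Real.exp (l1 * t)) ≠ 0 := by
      rw [hc2]
      exact mul_ne_zero hCne (mul_ne_zero e1 e2)
    have hDenNe :
        (l2 * y0 * Real.exp (l2 * t) * (l3 * (l3 * z0) * Real.exp (l3 * t)) -
            l3 * z0 * Real.exp (l3 * t) * (l2 * (l2 * y0) * Real.exp (l2 * t))) ^ 2 +
          (l3 * z0 * Real.exp (l3 * t) * (l1 * (l1 * x0) * Real.exp (l1 * t)) -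
            l1 * x0 * Real.exp (l1 * t) * (l3 * (l3 * z0) * Real.exp (l3 * t))) ^ 2 +
          (l1 * x0 * Real.exp (l1 * t) * (l2 * (l2 * y0) * Real.exp (l2 * t)) -
            l2 * y0 * Real.exp (l2 * t) * (l1 * (l1 * x0) * Real.exp (l1 * t))) ^ 2 ≠ 0 := by
      positivity
    rw [← mul_div_assoc, div_eq_div_iff hDenNe (hDpos t).ne']
    simp only [hD]
    rw [hx1, hx2, hx3, hK, hA, hB, hC]
    field_simp
    ring
  have htors : tors (fun t => ![x0 * Real.exp (l1 * t), y0 * Real.exp (l2 * t),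
      z0 * Real.exp (l3 * t)]) = fun t => Real.exp ((l3 - l1 - l2) * t) * (K / D t) :=
    funext key
  have hg : Tendsto (fun t => K / D t) atTop (nhds (K / C ^ 2)) := by
    apply Tendsto.div tendsto_const_nhds ?_ (by positivity)
    have hE1 : Tendsto (fun t : ℝ => Real.exp ((l3 - l1) * t)) atTop (nhds 0) :=
      exp_tendsto_zero (by linarith)
    have hE2 : Tendsto (fun t : ℝ => Real.exp ((l3 - l2) * t)) atTop (nhds 0) :=
      exp_tendsto_zero (by linarith)
    have := (((hE1.pow 2).const_mul (A ^ 2)).add ((hE2.pow 2).const_mul (B ^ 2))).add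
      tendsto_const_nhds (b := C ^ 2)
    simp only [hD]
    simpa using this
  refine ⟨?_, ?_, ?_⟩
  · intro h
    rw [htors]
    have hE : Tendsto (fun t : ℝ => Real.exp ((l3 - l1 - l2) * t)) atTop (nhds 0) :=
      exp_tendsto_zero (by linarith)
    simpa using hE.mul hg
  · intro h
    refine ⟨K / C ^ 2, div_ne_zero hKne (pow_ne_zero _ hCne), ?_⟩
    rw [htors]
    have hmu : l3 - l1 - l2 = 0 := by linarith
    simpa [hmu] using hg
  · intro h
    have hE : Tendsto (fun t : ℝ => Real.exp ((l3 - l1 - l2) * t)) atTop atTop :=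
      Real.tendsto_exp_atTop.comp (Tendsto.const_mul_atTop (by linarith) tendsto_id)
    have habs : Tendsto (fun t => |K / D t|) atTop (nhds |K / C ^ 2|) := hg.abs
    have hpos : 0 < |K / C ^ 2| :=
      abs_pos.mpr (div_ne_zero hKne (pow_ne_zero _ hCne))
    have := Tendsto.atTop_mul_pos hpos hE habs
    refine this.congr fun t => ?_
    rw [htors]
    simp only [abs_mul, abs_of_pos (Real.exp_pos _)]
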